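/- Let G be a finite simple graph and f a uniformly random labeling with fixed label counts. For pairwise distinct labels i, j, k, l, Cov(R_{ij}, R_{kl}) = (|G|^2 - sum_t |G_t|^2 + |G|) * 4 n_i n_j n_k n_l/(N(N-1)(N-2)(N-3)) - E(R_{ij}) E(R_{kl}). -/

import Mathlib

open Finset

variable {V : Type*} [Fintype V] [DecidableEq V] {K : ℕ}

/-- The set of labelings `f : V → Fin K` with exactly `n k` vertices labeled `k`. -/
def labelings (n : Fin K → ℕ) : Finset (V → Fin K) :=
  Finset.univ.filter fun f => ∀ k, (Finset.univ.filter fun x => f x = k).card = n k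

/-- Probability of an event under the uniform distribution on `labelings n`. -/
noncomputable def prob (n : Fin K → ℕ) (P : (V → Fin K) → Prop) [DecidablePred P] : ℝ :=
  (((labelings n).filter P).card : ℝ) / (((labelings n : Finset (V → Fin K))).card : ℝ)

/-- Expectation of a real random variable under the uniform distribution on `labelings n`. -/
noncomputable def expect (n : Fin K → ℕ) (X : (V → Fin K) → ℝ) : ℝ :=
  (∑ f ∈ labelings n, X f) / (((labelings n : Finset (V → Fin K))).card : ℝ)

/-- Covariance under the uniform distribution on `labelings n`. -/
noncomputable def covar (n : Fin K → ℕ) (X Y : (V → Fin K) → ℝ) : ℝ :=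
  expect n (fun f => (X f - expect n X) * (Y f - expect n Y))

/-- `Rcount G f i j` is the number of edges of `G` whose endpoint labels (under `f`)
are exactly the unordered pair `{i, j}`. -/
def Rcount (G : SimpleGraph V) [DecidableRel G.Adj] (f : V → Fin K) (i j : Fin K) : ℕ :=
  (G.edgeFinset.filter fun e => Sym2.map f e = s(i, j)).card

/-!
Write `R_ij f` as the number of darts `(a, b)` of `G` with `f a = i` and `f b = j`. The uniform
distribution on labelings is invariant under permutations of `V`, which act transitively on
injective `r`-tuples of vertices, so `r` distinct vertices carry `r` prescribed distinct labels
with probability `∏ n_c / (N (N - 1) ⋯ (N - r + 1))`. Hence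
`E R_ij = 2 |G| n_i n_j / (N (N - 1))`, and `E (R_ij R_kl)` is
`4 n_i n_j n_k n_l / (N (N - 1) (N - 2) (N - 3))` times the number of ordered pairs of
vertex-disjoint edges. That number is `|G|² - ∑_t deg(t)² + |G|`, because `∑_t deg(t)²` counts
the ordered pairs of edges sharing a vertex, each diagonal pair twice.
-/

open Function

section Labelings

variable (n : Fin K → ℕ)

lemma comp_perm_mem_labelings_iff (σ : Equiv.Perm V) {f : V → Fin K} :
    f ∘ σ ∈ labelings n ↔ f ∈ labelings n := by
  have hfiber (k : Fin K) : #{x | f (σ x) = k} = #{x | f x = k} := card_equiv σ (by simp)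
  simp [labelings, hfiber]

lemma labelings_nonempty (hsum : ∑ k, n k = Fintype.card V) :
    (labelings (V := V) n).Nonempty := by
  let e : V ≃ Σ k, Fin (n k) := Fintype.equivOfCardEq (by simp [hsum])
  refine ⟨fun x => (e x).1, mem_filter.2 ⟨mem_univ _, fun k => ?_⟩⟩
  rw [card_equiv e (t := {s | s.1 = k}) (by simp), ← Fintype.card_subtype,
    Fintype.card_congr (Equiv.sigmaSubtype k), Fintype.card_fin]

variable {ι : Type*} [Fintype ι]

lemma card_filter_comp_perm (σ : Equiv.Perm V) (g : ι → V) (c : ι → Fin K) :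
    #{f ∈ labelings n | ∀ t, f (σ (g t)) = c t}
      = #{f ∈ labelings n | ∀ t, f (g t) = c t} :=
  card_equiv (σ.symm.arrowCongr (Equiv.refl _)) fun f => by
    rw [show σ.symm.arrowCongr (Equiv.refl _) f = f ∘ σ from rfl]
    simp [comp_perm_mem_labelings_iff]

lemma card_filter_comp_eq_of_injective {g g' : ι → V} (hg : Injective g) (hg' : Injective g')
    (c : ι → Fin K) :
    #{f ∈ labelings n | ∀ t, f (g t) = c t} = #{f ∈ labelings n | ∀ t, f (g' t) = c t} := by
  obtain ⟨σ, hσ⟩ := Equiv.Perm.exists_extending_pair g g' hg hg'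
  simp only [← hσ, card_filter_comp_perm]

lemma card_filter_comp_eq_zero {g : ι → V} (hg : ¬Injective g) {c : ι → Fin K}
    (hc : Injective c) : #{f ∈ labelings n | ∀ t, f (g t) = c t} = 0 := by
  refine card_eq_zero.2 (filter_eq_empty_iff.2 fun f _ hf => hg ?_)
  rw [← funext hf] at hc
  exact hc.of_comp

lemma sum_card_filter_comp [DecidableEq ι] (c : ι → Fin K) :
    ∑ g : ι → V, #{f ∈ labelings n | ∀ t, f (g t) = c t}
      = #(labelings (V := V) n) * ∏ t, n (c t) := by
  have hfiber (f : V → Fin K) (hf : f ∈ labelings n) :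
      #{g : ι → V | ∀ t, f (g t) = c t} = ∏ t, n (c t) := by
    have : ({g : ι → V | ∀ t, f (g t) = c t} : Finset _)
        = Fintype.piFinset fun t => {x | f x = c t} := by ext; simp
    simp only [labelings, mem_filter] at hf
    simp [this, hf.2]
  simp only [card_filter]
  rw [sum_comm]
  simp only [← card_filter]
  rw [sum_congr rfl hfiber, sum_const, smul_eq_mul]

lemma card_filter_comp_mul_descFactorial [DecidableEq ι] {g : ι → V} (hg : Injective g)
    {c : ι → Fin K} (hc : Injective c) :
    #{f ∈ labelings n | ∀ t, f (g t) = c t} * (Fintype.card V).descFactorial (Fintype.card ι)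
      = #(labelings (V := V) n) * ∏ t, n (c t) := by
  -- in `sum_card_filter_comp` only injective tuples contribute, all of them equally
  rw [← sum_card_filter_comp, ← sum_filter_of_ne (s := univ) (p := Injective) fun g' _ h =>
    by_contra fun hg' => h (card_filter_comp_eq_zero n hg' hc)]
  rw [sum_congr rfl fun g' hg' => card_filter_comp_eq_of_injective n (mem_filter.1 hg').2 hg c,
    sum_const, smul_eq_mul, mul_comm, ← Fintype.card_embedding_eq,
    ← Fintype.card_congr (Equiv.subtypeInjectiveEquivEmbedding ι V), Fintype.card_subtype]

lemma covar_eq_expect_mul_sub (X Y : (V → Fin K) → ℝ) :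
    covar n X Y = expect n (fun f => X f * Y f) - expect n X * expect n Y := by
  unfold covar _root_.expect
  set L := labelings (V := V) n
  simp only [sub_mul, mul_sub, sum_sub_distrib, ← sum_mul, ← mul_sum, sum_const, nsmul_eq_mul]
  rcases eq_or_ne (#L : ℝ) 0 with h | h
  · simp [h]
  · field_simp
    ring

lemma expect_eq_div_of_sum_mul_eq (hL : (labelings (V := V) n).Nonempty)
    {X : (V → Fin K) → ℝ} {a c : ℝ} (hc : c ≠ 0)
    (h : (∑ f ∈ labelings n, X f) * c = #(labelings (V := V) n) * a) : expect n X = a / c := by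
  have hL' : (#(labelings (V := V) n) : ℝ) ≠ 0 := by exact_mod_cast hL.card_pos.ne'
  rw [_root_.expect, div_eq_div_iff hL' hc]
  linarith

end Labelings

lemma Sym2.card_inter_toFinset_add_ite_disjoint {α : Type*} [DecidableEq α] {e e' : Sym2 α}
    (he : ¬e.IsDiag) (he' : ¬e'.IsDiag) :
    #(e.toFinset ∩ e'.toFinset) + (if Disjoint e.toFinset e'.toFinset then 1 else 0)
      = 1 + if e = e' then 1 else 0 := by
  by_cases heq : e = e'
  · subst heq
    have hne : e.toFinset.Nonempty := card_pos.1 (by simp [Sym2.card_toFinset_of_not_isDiag e he])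
    simp [Sym2.card_toFinset_of_not_isDiag e he, hne.ne_empty]
  by_cases hdisj : Disjoint e.toFinset e'.toFinset
  · simp [disjoint_iff_inter_eq_empty.1 hdisj, hdisj, heq]
  · rw [if_neg hdisj, if_neg heq]
    refine le_antisymm (card_le_one.2 fun x hx y hy => ?_)
      (card_pos.2 (not_disjoint_iff_nonempty_inter.1 hdisj))
    by_contra hxy
    simp only [mem_inter, Sym2.mem_toFinset] at hx hy
    exact heq (Sym2.eq_of_ne_mem hxy hx.1 hy.1 hx.2 hy.2)

section Graph

open SimpleGraph

variable (G : SimpleGraph V) (n : Fin K → ℕ) {i j k l : Fin K}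

omit [Fintype V] in
lemma injective_dart_pair_iff (d d' : G.Dart) :
    Injective ![d.fst, d.snd, d'.fst, d'.snd] ↔ Disjoint d.edge.toFinset d'.edge.toFinset := by
  have := d.adj.ne
  have := d'.adj.ne
  simp [Dart.edge, Sym2.toFinset_mk_eq, Injective, Fin.forall_fin_succ]
  grind

lemma card_filter_dart_pair_mul_descFactorial (hij : i ≠ j) (hik : i ≠ k) (hil : i ≠ l)
    (hjk : j ≠ k) (hjl : j ≠ l) (hkl : k ≠ l) (d d' : G.Dart) :
    #{f ∈ labelings n | f d.fst = i ∧ f d.snd = j ∧ f d'.fst = k ∧ f d'.snd = l}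
        * (Fintype.card V).descFactorial 4
      = if Disjoint d.edge.toFinset d'.edge.toFinset then
          #(labelings (V := V) n) * (n i * (n j * (n k * n l))) else 0 := by
  have hc : Injective ![i, j, k, l] := by
    simp [Injective, Fin.forall_fin_succ]
    grind
  by_cases hg : Injective ![d.fst, d.snd, d'.fst, d'.snd]
  · rw [if_pos ((injective_dart_pair_iff G d d').1 hg)]
    simpa [Fin.forall_fin_succ, Fin.prod_univ_succ] using
      card_filter_comp_mul_descFactorial n hg hc
  · rw [if_neg (mt (injective_dart_pair_iff G d d').2 hg), mul_eq_zero]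
    left
    simpa [Fin.forall_fin_succ, -card_eq_zero] using card_filter_comp_eq_zero n hg hc

variable [DecidableRel G.Adj]

omit [DecidableEq V] in
/-- Since `i ≠ j`, exactly one orientation of each counted edge is labelled `(i, j)`. -/
lemma Rcount_eq_card_darts (f : V → Fin K) (hij : i ≠ j) :
    Rcount G f i j = #{d : G.Dart | f d.fst = i ∧ f d.snd = j} := by
  symm
  refine card_bij (fun d _ => d.edge) (fun d hd => ?_) (fun d hd d' hd' h => ?_) (fun e he => ?_)
  · simp only [mem_filter, mem_univ, true_and] at hd
    simp [Dart.edge, hd]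
  · rcases (G.dart_edge_eq_iff d d').1 h with rfl | rfl
    · rfl
    · simp only [mem_filter, mem_univ, true_and, Dart.symm_toProd] at hd hd'
      exact absurd (hd.1.symm.trans hd'.2) hij
  · simp only [mem_filter, mem_edgeFinset] at he
    obtain ⟨he, hmap⟩ := he
    induction e using Sym2.ind with
    | h a b =>
      rw [Sym2.map_mk, Sym2.eq_iff] at hmap
      rcases hmap with ⟨ha, hb⟩ | ⟨ha, hb⟩
      · exact ⟨⟨(a, b), he⟩, by simp [ha, hb], rfl⟩
      · exact ⟨⟨(b, a), he.symm⟩, by simp [ha, hb], Sym2.eq_swap⟩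

lemma sum_dart_edge {M : Type*} [AddCommMonoid M] (φ : Sym2 V → M) :
    ∑ d : G.Dart, φ d.edge = 2 • ∑ e ∈ G.edgeFinset, φ e := by
  rw [← sum_fiberwise_of_maps_to (g := Dart.edge) (t := G.edgeFinset)
    (fun d _ => by simp), smul_sum]
  refine sum_congr rfl fun e he => ?_
  rw [sum_congr rfl fun d hd => by rw [(mem_filter.1 hd).2], sum_const,
    G.dart_edge_fiber_card e (mem_edgeFinset.1 he)]

lemma sum_dart_pair_edge {M : Type*} [AddCommMonoid M] (φ : Sym2 V → Sym2 V → M) :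
    ∑ d : G.Dart, ∑ d' : G.Dart, φ d.edge d'.edge
      = 4 • ∑ e ∈ G.edgeFinset, ∑ e' ∈ G.edgeFinset, φ e e' := by
  simp only [sum_dart_edge G (φ _)]
  rw [sum_dart_edge G fun e => 2 • ∑ e' ∈ G.edgeFinset, φ e e', ← smul_sum, smul_smul]
  rfl

lemma sum_degree_sq_eq_sum_card_inter :
    ∑ t, G.degree t ^ 2
      = ∑ p ∈ G.edgeFinset ×ˢ G.edgeFinset, #(p.1.toFinset ∩ p.2.toFinset) := by
  have hdeg (t : V) :
      G.degree t ^ 2 = #{p ∈ G.edgeFinset ×ˢ G.edgeFinset | t ∈ p.1 ∧ t ∈ p.2} := by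
    rw [← card_incidenceFinset_eq_degree, incidenceFinset_eq_filter, sq, ← card_product,
      ← filter_product]
  have hinter (p : Sym2 V × Sym2 V) :
      #(p.1.toFinset ∩ p.2.toFinset) = #{t | t ∈ p.1 ∧ t ∈ p.2} := by
    congr 1; ext; simp
  simp only [hdeg, hinter, card_filter]
  exact sum_comm

lemma card_disjoint_edge_pairs_add_sum_degree_sq :
    #{p ∈ G.edgeFinset ×ˢ G.edgeFinset | Disjoint p.1.toFinset p.2.toFinset}
        + ∑ t, G.degree t ^ 2 = #G.edgeFinset ^ 2 + #G.edgeFinset := by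
  have hpair : ∀ p ∈ G.edgeFinset ×ˢ G.edgeFinset,
      #(p.1.toFinset ∩ p.2.toFinset) + (if Disjoint p.1.toFinset p.2.toFinset then 1 else 0)
        = 1 + if p.1 = p.2 then 1 else 0 := fun p hp => by
    simp only [mem_product, mem_edgeFinset] at hp
    exact Sym2.card_inter_toFinset_add_ite_disjoint (G.not_isDiag_of_mem_edgeSet hp.1)
      (G.not_isDiag_of_mem_edgeSet hp.2)
  rw [sum_degree_sq_eq_sum_card_inter, card_filter, add_comm, ← sum_add_distrib,
    sum_congr rfl hpair, sum_add_distrib, sum_boole, ← diag_eq_filter, diag_card]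
  simp [sq]

lemma sum_Rcount_mul_descFactorial (hij : i ≠ j) :
    (∑ f ∈ labelings n, Rcount G f i j) * (Fintype.card V).descFactorial 2
      = 2 * #G.edgeFinset * (#(labelings (V := V) n) * (n i * n j)) := by
  have hdart (d : G.Dart) : #{f ∈ labelings n | f d.fst = i ∧ f d.snd = j}
      * (Fintype.card V).descFactorial 2 = #(labelings (V := V) n) * (n i * n j) := by
    simpa [Fin.forall_fin_two] using card_filter_comp_mul_descFactorial n
      (g := ![d.fst, d.snd]) (injective_pair_iff_ne.2 d.adj.ne) (injective_pair_iff_ne.2 hij)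
  simp only [Rcount_eq_card_darts G _ hij, card_filter]
  rw [sum_comm]
  simp only [← card_filter, sum_mul, hdart, sum_const, card_univ,
    G.dart_card_eq_twice_card_edges, smul_eq_mul]

lemma sum_Rcount_mul_Rcount_mul_descFactorial (hij : i ≠ j) (hik : i ≠ k) (hil : i ≠ l)
    (hjk : j ≠ k) (hjl : j ≠ l) (hkl : k ≠ l) :
    (∑ f ∈ labelings n, Rcount G f i j * Rcount G f k l) * (Fintype.card V).descFactorial 4
      = 4 * #{p ∈ G.edgeFinset ×ˢ G.edgeFinset | Disjoint p.1.toFinset p.2.toFinset}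
          * (#(labelings (V := V) n) * (n i * (n j * (n k * n l)))) := by
  simp only [Rcount_eq_card_darts G _ hij, Rcount_eq_card_darts G _ hkl, card_filter, sum_mul_sum,
    ite_zero_mul_ite_zero, mul_one, and_assoc]
  rw [sum_comm]
  simp only [sum_comm (s := labelings n)]
  simp only [← card_filter, sum_mul,
    card_filter_dart_pair_mul_descFactorial G n hij hik hil hjk hjl hkl]
  rw [sum_dart_pair_edge G fun e e' => if Disjoint e.toFinset e'.toFinset then
    #(labelings (V := V) n) * (n i * (n j * (n k * n l))) else 0, ← sum_product', ← sum_filter,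
    sum_const, smul_eq_mul, smul_eq_mul, mul_assoc]

lemma expect_Rcount (hsum : ∑ k, n k = Fintype.card V) (hV : 2 ≤ Fintype.card V)
    (hij : i ≠ j) :
    expect n (fun f => (Rcount G f i j : ℝ))
      = 2 * (#G.edgeFinset : ℝ) * n i * n j
          / ((Fintype.card V : ℝ) * ((Fintype.card V : ℝ) - 1)) := by
  have hV' : (2 : ℝ) ≤ Fintype.card V := by exact_mod_cast hV
  refine expect_eq_div_of_sum_mul_eq n (labelings_nonempty n hsum)
    (mul_ne_zero (by linarith) (by linarith)) ?_
  have h := congrArg (Nat.cast (R := ℝ)) (sum_Rcount_mul_descFactorial G n hij)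
  push_cast [Nat.cast_descFactorial_two] at h
  linear_combination h

lemma expect_Rcount_mul_Rcount (hsum : ∑ k, n k = Fintype.card V)
    (hV : 4 ≤ Fintype.card V) (hij : i ≠ j) (hik : i ≠ k) (hil : i ≠ l) (hjk : j ≠ k)
    (hjl : j ≠ l) (hkl : k ≠ l) :
    expect n (fun f => (Rcount G f i j : ℝ) * (Rcount G f k l : ℝ))
      = ((#G.edgeFinset : ℝ) ^ 2 - ∑ t, (G.degree t : ℝ) ^ 2 + #G.edgeFinset)
          * (4 * (n i : ℝ) * n j * n k * n l
            / ((Fintype.card V : ℝ) * ((Fintype.card V : ℝ) - 1) * ((Fintype.card V : ℝ) - 2)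
              * ((Fintype.card V : ℝ) - 3))) := by
  have hV' : (4 : ℝ) ≤ Fintype.card V := by exact_mod_cast hV
  have hcast : ((Fintype.card V).descFactorial 4 : ℝ)
      = (Fintype.card V : ℝ) * ((Fintype.card V : ℝ) - 1) * ((Fintype.card V : ℝ) - 2)
        * ((Fintype.card V : ℝ) - 3) := by
    rw [Nat.cast_descFactorial]
    simp [ascPochhammer_succ_eval, Nat.cast_sub (by omega : 3 ≤ Fintype.card V)]
    ring
  rw [mul_div_assoc']
  refine expect_eq_div_of_sum_mul_eq n (labelings_nonempty n hsum)
    (by apply_rules [mul_ne_zero] <;> linarith) ?_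
  have h := congrArg (Nat.cast (R := ℝ))
    (sum_Rcount_mul_Rcount_mul_descFactorial G n hij hik hil hjk hjl hkl)
  have hcount := congrArg (Nat.cast (R := ℝ)) (card_disjoint_edge_pairs_add_sum_degree_sq G)
  push_cast [hcast] at h hcount
  linear_combination h + 4 * (#(labelings (V := V) n) : ℝ) * n i * n j * n k * n l * hcount

end Graph

theorem stmt_14 (G : SimpleGraph V) [DecidableRel G.Adj]
    (n : Fin K → ℕ) (N : ℕ) (hN : N = Fintype.card V) (hN4 : 4 ≤ N)
    (hsum : ∑ k, n k = N) (i j k l : Fin K)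
    (hij : i ≠ j) (hik : i ≠ k) (hil : i ≠ l) (hjk : j ≠ k) (hjl : j ≠ l) (hkl : k ≠ l)
    (m D : ℝ) (hm : m = (G.edgeFinset.card : ℝ))
    (hD : D = ∑ t : V, (G.degree t : ℝ) ^ 2) :
    covar n (fun f : V → Fin K => (Rcount G f i j : ℝ))
        (fun f : V → Fin K => (Rcount G f k l : ℝ))
      = (m ^ 2 - D + m) * (4 * (n i : ℝ) * (n j : ℝ) * (n k : ℝ) * (n l : ℝ)
            / ((N : ℝ) * ((N : ℝ) - 1) * ((N : ℝ) - 2) * ((N : ℝ) - 3)))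
        - (2 * m * (n i : ℝ) * (n j : ℝ) / ((N : ℝ) * ((N : ℝ) - 1)))
          * (2 * m * (n k : ℝ) * (n l : ℝ) / ((N : ℝ) * ((N : ℝ) - 1))) := by
  subst hN hm hD
  rw [covar_eq_expect_mul_sub, expect_Rcount_mul_Rcount G n hsum hN4 hij hik hil hjk hjl hkl,
    expect_Rcount G n hsum (by omega) hij, expect_Rcount G n hsum (by omega) hkl]
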